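/- For a minimal dynamical system (X,T), the proximal relation on X is transitive if and only if the little structure group Γ_e of the Ellis semigroup is trivial. -/

import Mathlib

/-!
Proximality is collapse by the Ellis semigroup `E`: `x` and `y` are proximal iff `q x = q y`
for some `q ∈ E`. If proximality is transitive, then `e x ~ p (e x) ~ e (p (e x))`, so these two
`e`-fixed points are collapsed by some `q`; since `E ∘ q ∘ e = E ∘ e` is a minimal left ideal,
`m ∘ q ∘ e = e` for some `m`, which forces `e (p (e x)) = e x`.

Conversely, if every `e ∘ p ∘ e = e`, then `e` lies in every minimal left ideal `M`: some
`g ∈ M` has `g ∘ e = e`, and for each `x` minimality of `X` yields an idempotent `p ∈ M` fixing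
`x`, whence `g x = g (e (p x)) = e x`. As every `E ∘ q` contains a minimal left ideal, `e = m ∘ q`
for each `q ∈ E`, so `x` and `y` are proximal iff `e x = e y`, a transitive relation.
-/

/-- The Ellis semigroup of the action. -/
def Ellis (T : Type*) (X : Type*) [TopologicalSpace X] [SMul T X] : Set (X → X) :=
  closure (Set.range fun t : T => fun x : X => t • x)

/-- A two-sided ideal of a sub-semigroup `E` of `X → X` under composition. -/
def IsIdealIn {X : Type*} (E I : Set (X → X)) : Prop :=
  I ⊆ E ∧ I.Nonempty ∧ ∀ f ∈ E, ∀ g ∈ I, f ∘ g ∈ I ∧ g ∘ f ∈ I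

/-- A minimal idempotent of `E`: an idempotent belonging to every two-sided ideal. -/
def IsMinIdem {X : Type*} (E : Set (X → X)) (p : X → X) : Prop :=
  p ∈ E ∧ p ∘ p = p ∧ ∀ I : Set (X → X), IsIdealIn E I → p ∈ I

/-- The proximal relation. -/
def Proximal (T : Type*) {X : Type*} [MetricSpace X] [SMul T X] (x y : X) : Prop :=
  ∀ ε > 0, ∃ t : T, dist (t • x) (t • y) < ε

open Set Function

section LeftIdeals

variable {X : Type*}

def IsCompSemigroup (E : Set (X → X)) : Prop :=
  ∀ ⦃f⦄, f ∈ E → ∀ ⦃g⦄, g ∈ E → f ∘ g ∈ E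

def IsLeftIdealIn (E I : Set (X → X)) : Prop :=
  I ⊆ E ∧ I.Nonempty ∧ ∀ f ∈ E, ∀ g ∈ I, f ∘ g ∈ I

variable {E M : Set (X → X)}

theorem IsIdealIn.isLeftIdealIn {I : Set (X → X)} (hI : IsIdealIn E I) : IsLeftIdealIn E I :=
  ⟨hI.1, hI.2.1, fun f hf g hg => (hI.2.2 f hf g hg).1⟩

theorem IsLeftIdealIn.image_comp_right (hE : IsCompSemigroup E) {I : Set (X → X)}
    (hI : IsLeftIdealIn E I) {g : X → X} (hg : g ∈ E) : IsLeftIdealIn E ((· ∘ g) '' I) := by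
  refine ⟨?_, hI.2.1.image _, ?_⟩
  · rintro _ ⟨f, hf, rfl⟩
    exact hE (hI.1 hf) hg
  · rintro f hf _ ⟨m, hm, rfl⟩
    exact ⟨f ∘ m, hI.2.2 f hf m hm, rfl⟩

namespace IsCompSemigroup

theorem isLeftIdealIn_self (hE : IsCompSemigroup E) (hne : E.Nonempty) : IsLeftIdealIn E E :=
  ⟨Subset.rfl, hne, fun _ hf _ hg => hE hf hg⟩

theorem isLeftIdealIn_image_comp_right (hE : IsCompSemigroup E) {g : X → X} (hg : g ∈ E) :
    IsLeftIdealIn E ((· ∘ g) '' E) :=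
  (hE.isLeftIdealIn_self ⟨g, hg⟩).image_comp_right hE hg

theorem image_comp_right_eq_of_minimal (hE : IsCompSemigroup E)
    (hM : Minimal (IsLeftIdealIn E) M) {m : X → X} (hm : m ∈ M) : (· ∘ m) '' E = M := by
  refine hM.eq_of_le (hE.isLeftIdealIn_image_comp_right (hM.1.1 hm)) ?_
  rintro _ ⟨f, hf, rfl⟩
  exact hM.1.2.2 f hf m hm

theorem comp_eq_left_of_minimal (hE : IsCompSemigroup E) (hM : Minimal (IsLeftIdealIn E) M)
    {f p : X → X} (hf : f ∈ M) (hp : p ∈ M) (hpp : p ∘ p = p) : f ∘ p = f := by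
  rw [← hE.image_comp_right_eq_of_minimal hM hp] at hf
  obtain ⟨g, -, rfl⟩ := hf
  rw [comp_assoc, hpp]

theorem minimal_image_comp_right (hE : IsCompSemigroup E) (hM : Minimal (IsLeftIdealIn E) M)
    {g : X → X} (hg : g ∈ E) : Minimal (IsLeftIdealIn E) ((· ∘ g) '' M) := by
  refine ⟨hM.1.image_comp_right hE hg, fun I hI hIM => ?_⟩
  set J := {m ∈ M | m ∘ g ∈ I}
  have hJ : IsLeftIdealIn E J := by
    refine ⟨fun m hm => hM.1.1 hm.1, ?_, fun f hf m hm => ⟨hM.1.2.2 f hf m hm.1, ?_⟩⟩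
    · obtain ⟨i, hi⟩ := hI.2.1
      obtain ⟨m, hm, rfl⟩ := hIM hi
      exact ⟨m, hm, hi⟩
    · exact hI.2.2 f hf _ hm.2
  have hJM : J = M := hM.eq_of_le hJ fun m hm => hm.1
  rintro _ ⟨m, hm, rfl⟩
  exact (hJM.symm ▸ hm : m ∈ J).2

theorem isMinIdem_of_mem_minimal (hE : IsCompSemigroup E) (hM : Minimal (IsLeftIdealIn E) M)
    {p : X → X} (hp : p ∈ M) (hpp : p ∘ p = p) : IsMinIdem E p := by
  refine ⟨hM.1.1 hp, hpp, fun I hI => ?_⟩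
  have hIp : (· ∘ p) '' I = M := by
    refine hM.eq_of_le (hI.isLeftIdealIn.image_comp_right hE (hM.1.1 hp)) ?_
    rintro _ ⟨i, hi, rfl⟩
    exact hM.1.2.2 i (hI.1 hi) p hp
  obtain ⟨i, hi, hip⟩ : p ∈ (· ∘ p) '' I := hIp ▸ hp
  exact hip ▸ (hI.2.2 p (hM.1.1 hp) i hi).2

end IsCompSemigroup

end LeftIdeals

section CompactSemigroup

variable {X : Type*} [TopologicalSpace X] {E M : Set (X → X)}

-- Ellis–Numakura, read in the monoid `Function.End X`, whose multiplication is composition.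
theorem exists_idempotent_of_isCompact [T2Space X] {S : Set (X → X)} (hne : S.Nonempty)
    (hS : IsCompact S) (hmul : ∀ f ∈ S, ∀ g ∈ S, f ∘ g ∈ S) : ∃ p ∈ S, p ∘ p = p :=
  @exists_idempotent_in_compact_subsemigroup (Function.End X) _ Pi.topologicalSpace Pi.t2Space
    Pi.continuous_precomp S hne hS hmul

namespace IsCompSemigroup

theorem isCompact_of_minimal (hE : IsCompSemigroup E) (hEc : IsCompact E)
    (hM : Minimal (IsLeftIdealIn E) M) : IsCompact M := by
  obtain ⟨m, hm⟩ := hM.1.2.1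
  rw [← hE.image_comp_right_eq_of_minimal hM hm]
  exact hEc.image (Pi.continuous_precomp m)

theorem isLeftIdealIn_sInter_of_isChain (hEc : IsCompact E) {c : Set (Set (X → X))}
    (hc : ∀ J ∈ c, IsLeftIdealIn E J ∧ IsClosed J) (hchain : IsChain (· ⊆ ·) c)
    (hne : c.Nonempty) : IsLeftIdealIn E (⋂₀ c) := by
  have : Nonempty c := hne.to_subtype
  have hdir : DirectedOn (· ⊇ ·) c :=
    IsChain.directedOn (r := fun A B : Set (X → X) => A ⊇ B) hchain.symm
  obtain ⟨J₀, hJ₀⟩ := hne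
  refine ⟨(sInter_subset_of_mem hJ₀).trans (hc J₀ hJ₀).1.1, ?_,
    fun f hf g hg J hJ => (hc J hJ).1.2.2 f hf g (hg J hJ)⟩
  exact IsCompact.nonempty_sInter_of_directed_nonempty_isCompact_isClosed hdir
    (fun J hJ => (hc J hJ).1.2.1) (fun J hJ => hEc.of_isClosed_subset (hc J hJ).2 (hc J hJ).1.1)
    (fun J hJ => (hc J hJ).2)

variable [T2Space X]

theorem exists_minimal_subset (hE : IsCompSemigroup E) (hEc : IsCompact E) {I : Set (X → X)}
    (hI : IsLeftIdealIn E I) : ∃ M ⊆ I, Minimal (IsLeftIdealIn E) M := by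
  have hprincipal : ∀ {g}, g ∈ E → IsLeftIdealIn E ((· ∘ g) '' E) ∧ IsClosed ((· ∘ g) '' E) :=
    fun {g} hg => ⟨hE.isLeftIdealIn_image_comp_right hg,
      (hEc.image (Pi.continuous_precomp g)).isClosed⟩
  obtain ⟨i, hi⟩ := hI.2.1
  obtain ⟨M, hMi, hM⟩ := zorn_superset_nonempty {J | IsLeftIdealIn E J ∧ IsClosed J}
    (fun c hc hchain hne => ⟨⋂₀ c, ⟨isLeftIdealIn_sInter_of_isChain hEc (fun J hJ => hc hJ)
      hchain hne, isClosed_sInter fun J hJ => (hc hJ).2⟩, fun _ => sInter_subset_of_mem⟩)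
    ((· ∘ i) '' E) (hprincipal (hI.1 hi))
  refine ⟨M, hMi.trans ?_, hM.1.1, fun J hJ hJM => ?_⟩
  · rintro _ ⟨f, hf, rfl⟩
    exact hI.2.2 f hf i hi
  · obtain ⟨j, hj⟩ := hJ.2.1
    have hEj : (· ∘ j) '' E ⊆ J := by
      rintro _ ⟨f, hf, rfl⟩
      exact hJ.2.2 f hf j hj
    exact (hM.2 (hprincipal (hJ.1 hj)) (hEj.trans hJM)).trans hEj

theorem exists_idempotent_apply_eq_of_minimal (hE : IsCompSemigroup E) (hEc : IsCompact E)
    (hM : Minimal (IsLeftIdealIn E) M) {x : X} (hx : ∃ f ∈ M, f x = x) :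
    ∃ p ∈ M, p ∘ p = p ∧ p x = x := by
  obtain ⟨p, ⟨hpM, hpx⟩, hpp⟩ := exists_idempotent_of_isCompact (S := {f ∈ M | f x = x}) hx
    ((hE.isCompact_of_minimal hEc hM).inter_right
      (isClosed_eq (continuous_apply x) continuous_const))
    fun f hf g hg => ⟨hM.1.2.2 f (hM.1.1 hf.1) g hg.1, by simp [hf.2, hg.2]⟩
  exact ⟨p, hpM, hpp, hpx⟩

theorem minimal_image_comp_right_of_isMinIdem (hE : IsCompSemigroup E) (hEc : IsCompact E)
    {e : X → X} (he : IsMinIdem E e) : Minimal (IsLeftIdealIn E) ((· ∘ e) '' E) := by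
  obtain ⟨M₀, -, hM₀⟩ := hE.exists_minimal_subset hEc (hE.isLeftIdealIn_self ⟨e, he.1⟩)
  have hJ : IsIdealIn E (image2 (· ∘ ·) M₀ E) := by
    refine ⟨?_, hM₀.1.2.1.image2 ⟨e, he.1⟩, ?_⟩
    · rintro _ ⟨m, hm, g, hg, rfl⟩
      exact hE (hM₀.1.1 hm) hg
    · rintro f hf _ ⟨m, hm, g, hg, rfl⟩
      exact ⟨⟨f ∘ m, hM₀.1.2.2 f hf m hm, g, hg, rfl⟩, ⟨m, hm, g ∘ f, hE hg hf, rfl⟩⟩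
  obtain ⟨m, hm, h, hh, hmh⟩ := he.2.2 _ hJ
  have hN := hE.minimal_image_comp_right hM₀ hh
  rwa [hE.image_comp_right_eq_of_minimal hN ⟨m, hm, hmh⟩]

end IsCompSemigroup

namespace IsMinIdem

variable [T2Space X] {e : X → X}

theorem exists_comp_comp_eq (he : IsMinIdem E e) (hE : IsCompSemigroup E) (hEc : IsCompact E)
    {q : X → X} (hq : q ∈ E) : ∃ m ∈ E, m ∘ q ∘ e = e := by
  have hL := hE.minimal_image_comp_right_of_isMinIdem hEc he
  have hee : e ∈ (· ∘ e) '' E := ⟨e, he.1, he.2.1⟩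
  rwa [← hE.image_comp_right_eq_of_minimal hL ⟨q, hq, rfl⟩] at hee

theorem eq_of_apply_eq (he : IsMinIdem E e) (hE : IsCompSemigroup E) (hEc : IsCompact E)
    {q : X → X} (hq : q ∈ E) {a b : X} (ha : e a = a) (hb : e b = b) (hab : q a = q b) :
    a = b := by
  obtain ⟨m, -, hm⟩ := he.exists_comp_comp_eq hE hEc hq
  calc a = e a := ha.symm
    _ = m (q (e a)) := (congrFun hm a).symm
    _ = m (q (e b)) := by rw [ha, hb, hab]
    _ = e b := congrFun hm b
    _ = b := hb

theorem mem_of_minimal (he : IsMinIdem E e) (hE : IsCompSemigroup E) (hEc : IsCompact E)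
    (hgens : ∀ p, IsMinIdem E p → e ∘ p ∘ e = e) (hM : Minimal (IsLeftIdealIn E) M)
    (hfix : ∀ x, ∃ f ∈ M, f x = x) : e ∈ M := by
  obtain ⟨g, hgM, hge⟩ : e ∈ (· ∘ e) '' M :=
    (hE.minimal_image_comp_right_of_isMinIdem hEc he).2 (hM.1.image_comp_right hE he.1)
      (image_mono hM.1.1) ⟨e, he.1, he.2.1⟩
  suffices g = e from this ▸ hgM
  funext x
  obtain ⟨p, hpM, hpp, hpx⟩ := hE.exists_idempotent_apply_eq_of_minimal hEc hM (hfix x)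
  have hep : (e ∘ p) ∘ (e ∘ p) = e ∘ p := by
    change (e ∘ p ∘ e) ∘ p = e ∘ p
    rw [hgens p (hE.isMinIdem_of_mem_minimal hM hpM hpp)]
  have hgep := hE.comp_eq_left_of_minimal hM hgM (hM.1.2.2 e he.1 p hpM) hep
  calc g x = g (e (p x)) := (congrFun hgep x).symm
    _ = g (e x) := by rw [hpx]
    _ = e x := congrFun hge x

theorem exists_comp_eq (he : IsMinIdem E e) (hE : IsCompSemigroup E) (hEc : IsCompact E)
    (hgens : ∀ p, IsMinIdem E p → e ∘ p ∘ e = e)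
    (hfix : ∀ M, Minimal (IsLeftIdealIn E) M → ∀ x, ∃ f ∈ M, f x = x) {q : X → X} (hq : q ∈ E) :
    ∃ m ∈ E, m ∘ q = e := by
  obtain ⟨M, hMq, hM⟩ := hE.exists_minimal_subset hEc (hE.isLeftIdealIn_image_comp_right hq)
  exact hMq (he.mem_of_minimal hE hEc hgens hM (hfix M hM))

end IsMinIdem

end CompactSemigroup

section Ellis

open scoped Pointwise

variable {T X : Type*}

theorem isCompact_ellis [TopologicalSpace X] [CompactSpace X] [SMul T X] :
    IsCompact (Ellis T X) :=
  isClosed_closure.isCompact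

theorem proximal_of_apply_eq [MetricSpace X] [SMul T X] {q : X → X} (hq : q ∈ Ellis T X)
    {a b : X} (hab : q a = q b) : Proximal T a b := by
  intro ε hε
  have hU : IsOpen {f : X → X | dist (f a) (f b) < ε} :=
    isOpen_lt ((continuous_apply a).dist (continuous_apply b)) continuous_const
  obtain ⟨_, hf, t, rfl⟩ := mem_closure_iff.1 hq _ hU (by simpa [hab] using hε)
  exact ⟨t, hf⟩

theorem Proximal.exists_apply_eq [MetricSpace X] [CompactSpace X] [SMul T X] {a b : X}
    (h : Proximal T a b) : ∃ q ∈ Ellis T X, q a = q b := by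
  obtain ⟨t₀, -⟩ := h 1 one_pos
  obtain ⟨q, hq, hmin⟩ := isCompact_ellis.exists_isMinOn ⟨_, subset_closure ⟨t₀, rfl⟩⟩
    (f := fun q : X → X => dist (q a) (q b))
    ((continuous_apply a).dist (continuous_apply b)).continuousOn
  refine ⟨q, hq, eq_of_forall_dist_le fun ε hε => ?_⟩
  obtain ⟨t, ht⟩ := h ε hε
  exact (isMinOn_iff.1 hmin _ (subset_closure ⟨t, rfl⟩)).trans ht.le

theorem proximal_apply_of_idempotent [MetricSpace X] [SMul T X] {p : X → X}
    (hp : p ∈ Ellis T X) (hpp : p ∘ p = p) (x : X) : Proximal T x (p x) :=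
  proximal_of_apply_eq hp (congrFun hpp x).symm

section MulAction

variable [Monoid T] [TopologicalSpace X] [MulAction T X]

theorem smul_mem_ellis (t : T) : (fun x : X => t • x) ∈ Ellis T X :=
  subset_closure ⟨t, rfl⟩

theorem isCompSemigroup_ellis (hcont : ∀ t : T, Continuous fun x : X => t • x) :
    IsCompSemigroup (Ellis T X) := by
  intro f hf g hg
  have htg : ∀ t : T, (fun x : X => t • x) ∘ g ∈ Ellis T X := fun t =>
    map_mem_closure (Pi.continuous_postcomp (hcont t)) hg <| by
      rintro _ ⟨s, rfl⟩
      exact ⟨t * s, funext fun x => mul_smul t s x⟩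
  have hfg : f ∘ g ∈ closure (Ellis T X) :=
    map_mem_closure (f := (· ∘ g)) (Pi.continuous_precomp g) hf <| by
      rintro _ ⟨t, rfl⟩
      exact htg t
  exact isClosed_closure.closure_subset hfg

theorem exists_apply_eq_self_of_minimal [T2Space X] [CompactSpace X]
    (hcont : ∀ t : T, Continuous fun x : X => t • x) (hmin : ∀ x : X, Dense (MulAction.orbit T x))
    {M : Set (X → X)} (hM : Minimal (IsLeftIdealIn (Ellis T X)) M) (x : X) :
    ∃ f ∈ M, f x = x := by
  have : MulAction.IsMinimal T X := ⟨hmin⟩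
  have hMx : (fun f : X → X => f x) '' M = univ := by
    rw [← (((isCompSemigroup_ellis hcont).isCompact_of_minimal isCompact_ellis hM).image
      (continuous_apply x)).isClosed.closure_eq]
    refine (dense_of_nonempty_smul_invariant T (hM.1.2.1.image _) fun t => ?_).closure_eq
    rw [smul_set_subset_iff]
    rintro _ ⟨f, hf, rfl⟩
    exact ⟨_, hM.1.2.2 _ (smul_mem_ellis t) f hf, rfl⟩
  obtain ⟨f, hf, hfx⟩ : x ∈ (fun f : X → X => f x) '' M := hMx ▸ mem_univ x
  exact ⟨f, hf, hfx⟩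

end MulAction

theorem proximal_iff_apply_eq [Monoid T] [MetricSpace X] [CompactSpace X] [MulAction T X]
    (hcont : ∀ t : T, Continuous fun x : X => t • x) (hmin : ∀ x : X, Dense (MulAction.orbit T x))
    {e : X → X} (he : IsMinIdem (Ellis T X) e)
    (hgens : ∀ p, IsMinIdem (Ellis T X) p → e ∘ p ∘ e = e) {a b : X} :
    Proximal T a b ↔ e a = e b := by
  refine ⟨fun h => ?_, proximal_of_apply_eq he.1⟩
  obtain ⟨q, hq, hab⟩ := h.exists_apply_eq
  obtain ⟨m, -, hm⟩ := he.exists_comp_eq (isCompSemigroup_ellis hcont) isCompact_ellis hgens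
    (fun M hM => exists_apply_eq_self_of_minimal hcont hmin hM) hq
  rw [← hm, comp_apply, comp_apply, hab]

end Ellis

/-- For a minimal system `(X,T)`, the proximal relation is transitive iff the little
structure group `Γ_e` is trivial, i.e. all its generators `e ∘ p ∘ e` (`p` a minimal
idempotent) equal `e`. -/
theorem stmt9 {T : Type*} [Group T] {X : Type*} [MetricSpace X] [CompactSpace X]
    [MulAction T X]
    (hcont : ∀ t : T, Continuous fun x : X => t • x)
    (hmin : ∀ x : X, Dense (MulAction.orbit T x))
    (e : X → X) (he : IsMinIdem (Ellis T X) e) :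
    Transitive (fun x y : X => Proximal T x y) ↔
      (∀ p : X → X, IsMinIdem (Ellis T X) p → e ∘ p ∘ e = e) := by
  refine ⟨fun htrans p hp => funext fun x => ?_, fun hgens x y z hxy hyz => ?_⟩
  · obtain ⟨q, hq, hcollapse⟩ := (htrans (proximal_apply_of_idempotent hp.1 hp.2.1 (e x))
      (proximal_apply_of_idempotent he.1 he.2.1 (p (e x)))).exists_apply_eq
    exact (he.eq_of_apply_eq (isCompSemigroup_ellis hcont) isCompact_ellis hq
      (congrFun he.2.1 x) (congrFun he.2.1 _) hcollapse).symm
  · have hprox : ∀ a b : X, Proximal T a b ↔ e a = e b := fun a b =>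
      proximal_iff_apply_eq hcont hmin he hgens
    exact (hprox x z).2 (((hprox x y).1 hxy).trans ((hprox y z).1 hyz))
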